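/- Let D = P + K where P ∈ B(H) is an orthogonal projection, K is a Hilbert–Schmidt operator, and D is idempotent (D² = D). Then P K P and P^⊥ K P^⊥ are trace-class operators. -/

import Mathlib

/-- An operator is Hilbert–Schmidt if `Σ ‖K e i‖²` converges in every orthonormal basis. -/
def IsHilbertSchmidtOp {H : Type*} [NormedAddCommGroup H] [InnerProductSpace ℂ H]
    (K : H →L[ℂ] H) : Prop :=
  ∀ e : HilbertBasis ℕ ℂ H, Summable fun i => ‖K (e i)‖ ^ 2

/-- An operator is trace class iff it is a product of two Hilbert–Schmidt operators
(standard characterization of the trace class). -/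
def IsTraceClassOp {H : Type*} [NormedAddCommGroup H] [InnerProductSpace ℂ H]
    (S : H →L[ℂ] H) : Prop :=
  ∃ A B : H →L[ℂ] H, IsHilbertSchmidtOp A ∧ IsHilbertSchmidtOp B ∧ S = A ∘L B

/-!
Expanding `(P + K)² = P + K` gives `K = PK + KP + K²`. Compressing this identity by `P` on
both sides yields `PKP = -PK · KP`, and compressing it by `P^⊥` (using `PP^⊥ = P^⊥P = 0`) yields
`P^⊥KP^⊥ = P^⊥K · KP^⊥`. Both right-hand sides are products of two Hilbert–Schmidt operators,
because the Hilbert–Schmidt operators form a two-sided ideal: left multiplication is bounded by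
the operator norm, and right multiplication reduces to it through adjoints, since Parseval's
identity writes `∑ ‖T eᵢ‖²` and `∑ ‖T* eᵢ‖²` as the same double sum `∑ |⟪eⱼ, T eᵢ⟫|²`.
-/

open scoped InnerProductSpace

namespace HilbertBasis

variable {ι 𝕜 E : Type*} [RCLike 𝕜] [NormedAddCommGroup E] [InnerProductSpace 𝕜 E]

theorem hasSum_norm_inner_sq (b : HilbertBasis ι 𝕜 E) (x : E) :
    HasSum (fun i => ‖⟪b i, x⟫_𝕜‖ ^ 2) (‖x‖ ^ 2) := by
  have h : HasSum (fun i => ‖b.repr x i‖ ^ 2) (‖b.repr x‖ ^ 2) := by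
    apply_mod_cast lp.hasSum_norm ?_ (b.repr x)
    simp
  simpa only [b.repr_apply_apply, LinearIsometryEquiv.norm_map] using h

theorem summable_norm_adjoint_apply_sq [CompleteSpace E] (b : HilbertBasis ι 𝕜 E)
    {T : E →L[𝕜] E} (hT : Summable fun i => ‖T (b i)‖ ^ 2) :
    Summable fun i => ‖T.adjoint (b i)‖ ^ 2 := by
  have hF : Summable fun p : ι × ι => ‖⟪b p.2, T (b p.1)⟫_𝕜‖ ^ 2 := by
    refine (summable_prod_of_nonneg fun _ => by positivity).2
      ⟨fun i => (b.hasSum_norm_inner_sq (T (b i))).summable, ?_⟩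
    simpa only [(b.hasSum_norm_inner_sq _).tsum_eq] using hT
  have hF_swap : (fun p : ι × ι => ‖⟪b p.1, T (b p.2)⟫_𝕜‖ ^ 2) =
      fun p => ‖⟪b p.2, T.adjoint (b p.1)⟫_𝕜‖ ^ 2 := by
    funext p
    rw [ContinuousLinearMap.adjoint_inner_right, ← inner_conj_symm, RCLike.norm_conj]
  have h := ((summable_prod_of_nonneg fun _ => by positivity).1 (hF_swap ▸ hF.prod_symm)).2
  simpa only [(b.hasSum_norm_inner_sq _).tsum_eq] using h

end HilbertBasis

namespace IsHilbertSchmidtOp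

variable {H : Type*} [NormedAddCommGroup H] [InnerProductSpace ℂ H] {T : H →L[ℂ] H}

theorem adjoint [CompleteSpace H] (hT : IsHilbertSchmidtOp T) :
    IsHilbertSchmidtOp T.adjoint :=
  fun b => b.summable_norm_adjoint_apply_sq (hT b)

theorem comp_left (hT : IsHilbertSchmidtOp T) (A : H →L[ℂ] H) :
    IsHilbertSchmidtOp (A ∘L T) := fun b =>
  ((hT b).mul_left (‖A‖ ^ 2)).of_nonneg_of_le (fun _ => by positivity) fun i => by
    rw [← mul_pow]
    gcongr
    exact A.le_opNorm _

theorem comp_right [CompleteSpace H] (hT : IsHilbertSchmidtOp T) (B : H →L[ℂ] H) :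
    IsHilbertSchmidtOp (T ∘L B) := by
  simpa only [ContinuousLinearMap.adjoint_comp, ContinuousLinearMap.adjoint_adjoint] using
    (hT.adjoint.comp_left B.adjoint).adjoint

theorem isTraceClassOp_comp {S : H →L[ℂ] H} (hS : IsHilbertSchmidtOp S)
    (hT : IsHilbertSchmidtOp T) : IsTraceClassOp (S ∘L T) :=
  ⟨S, T, hS, hT, rfl⟩

end IsHilbertSchmidtOp

namespace IsIdempotentElem

variable {R : Type*} [Ring R] {p k : R}

theorem eq_mul_add_mul_add_mul_self (hp : IsIdempotentElem p) (hpk : IsIdempotentElem (p + k)) :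
    k = p * k + k * p + k * k := by
  calc k = (p + k) * (p + k) - p * p := by rw [hpk.eq, hp.eq]; abel
    _ = p * k + k * p + k * k := by noncomm_ring

theorem mul_mul_eq_neg_mul_mul_mul (hp : IsIdempotentElem p) (hpk : IsIdempotentElem (p + k)) :
    p * (k * p) = -p * k * (k * p) := by
  have hk := hp.eq_mul_add_mul_add_mul_self hpk
  have h : p * (k * p) = p * (k * p) + p * (k * p) + p * k * (k * p) :=
    calc p * (k * p) = p * (p * k + k * p + k * k) * p := by rw [← hk, mul_assoc]
      _ = p * p * k * p + p * k * (p * p) + p * k * (k * p) := by noncomm_ring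
      _ = p * (k * p) + p * (k * p) + p * k * (k * p) := by rw [hp.eq, mul_assoc, mul_assoc]
  rw [add_assoc, left_eq_add] at h
  rw [eq_neg_of_add_eq_zero_left h, neg_mul, neg_mul]

theorem one_sub_mul_mul_one_sub (hp : IsIdempotentElem p) (hpk : IsIdempotentElem (p + k)) :
    (1 - p) * (k * (1 - p)) = (1 - p) * k * (k * (1 - p)) :=
  calc (1 - p) * (k * (1 - p)) = (1 - p) * (p * k + k * p + k * k) * (1 - p) := by
        rw [← hp.eq_mul_add_mul_add_mul_self hpk, mul_assoc]
    _ = (1 - p) * p * k * (1 - p) + (1 - p) * k * (p * (1 - p)) + (1 - p) * k * (k * (1 - p)) := by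
        noncomm_ring
    _ = (1 - p) * k * (k * (1 - p)) := by
        rw [hp.one_sub_mul_self, hp.mul_one_sub_self, zero_mul, zero_mul, mul_zero, zero_add, zero_add]

end IsIdempotentElem

theorem corner_compressions_traceClass_general {H : Type*} [NormedAddCommGroup H]
    [InnerProductSpace ℂ H] [CompleteSpace H]
    (P K : H →L[ℂ] H) (hP : P ∘L P = P)
    (hK : IsHilbertSchmidtOp K)
    (hD : (P + K) ∘L (P + K) = P + K) :
    IsTraceClassOp (P ∘L K ∘L P) ∧ IsTraceClassOp ((1 - P) ∘L K ∘L (1 - P)) := by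
  have hP : IsIdempotentElem P := hP
  have hD : IsIdempotentElem (P + K) := hD
  constructor
  · rw [show P ∘L K ∘L P = (-P ∘L K) ∘L (K ∘L P) from hP.mul_mul_eq_neg_mul_mul_mul hD]
    exact (hK.comp_left (-P)).isTraceClassOp_comp (hK.comp_right P)
  · rw [show (1 - P) ∘L K ∘L (1 - P) = ((1 - P) ∘L K) ∘L (K ∘L (1 - P)) from
      hP.one_sub_mul_mul_one_sub hD]
    exact (hK.comp_left (1 - P)).isTraceClassOp_comp (hK.comp_right (1 - P))

/-- If `D = P + K` is idempotent, `P` an orthogonal projection and `K`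
Hilbert–Schmidt, then `P K P` and `P^⊥ K P^⊥` are trace class. -/
theorem corner_compressions_traceClass {H : Type*} [NormedAddCommGroup H]
    [InnerProductSpace ℂ H] [CompleteSpace H] (e₀ : HilbertBasis ℕ ℂ H)
    (P K : H →L[ℂ] H) (hP : P ∘L P = P) (hPsa : IsSelfAdjoint P)
    (hK : IsHilbertSchmidtOp K)
    (hD : (P + K) ∘L (P + K) = P + K) :
    IsTraceClassOp (P ∘L K ∘L P) ∧ IsTraceClassOp ((1 - P) ∘L K ∘L (1 - P)) :=
  corner_compressions_traceClass_general P K hP hK hD
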